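/- arXiv:1501.03473 — 3 statements merged into one kernel-verified Lean document; each statement's English description precedes it below -/
import Mathlib

section
/- Let E = F ⊕ G be a Banach space with closed complementary subspaces, P the projection onto F along G, and A a bounded operator with ‖A‖ ≤ 1, A = I on F, A(G) ⊆ G. Suppose there is a sequence of nonnegative reals (a_k) with ∑ a_k ≤ S < ∞ and ‖A^k − P‖ ≤ a_k for all k ≥ 1. Then for every unit vector v ∈ G, ‖A v − v‖ ≥ 1/(1 + S). -/
/-!
With `w = v - A v`, both `v` and `w` lie in `G`, so `P` kills them and
`‖A ^ k x‖ ≤ ‖A ^ k - P‖ ‖x‖ ≤ a k ‖x‖` for `k ≥ 1`. Telescoping, `v - A ^ (n + 1) v = ∑_{k ≤ n} A ^ k w`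
has norm at most `(1 + S) ‖w‖`, while `‖A ^ (n + 1) v‖ ≤ a (n + 1) → 0`; hence `1 = ‖v‖ ≤ (1 + S) ‖w‖`.
-/

open Finset Filter Topology

namespace ContinuousLinearMap

variable {𝕜 E : Type*} [NontriviallyNormedField 𝕜] [SeminormedAddCommGroup E]
  [NormedSpace 𝕜 E]

theorem sum_range_pow_apply_sub_apply (A : E →L[𝕜] E) (v : E) (n : ℕ) :
    ∑ k ∈ range n, (A ^ k) (v - A v) = v - (A ^ n) v := by
  simpa [_root_.sum_apply] using congr($(geom_sum_mul_neg A n) v)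

theorem norm_apply_le_norm_sub_mul_of_apply_eq_zero (T P : E →L[𝕜] E) {x : E} (hx : P x = 0) :
    ‖T x‖ ≤ ‖T - P‖ * ‖x‖ := by
  simpa [hx] using (T - P).le_opNorm x

theorem norm_sub_pow_succ_apply_le {P A : E →L[𝕜] E} {v : E} (hPw : P (v - A v) = 0)
    {a : ℕ → ℝ} (ha0 : ∀ k, 0 ≤ a k) (hsum : Summable a)
    (hak : ∀ k : ℕ, 1 ≤ k → ‖A ^ k - P‖ ≤ a k) (n : ℕ) :
    ‖v - (A ^ (n + 1)) v‖ ≤ (1 + ∑' k, a k) * ‖v - A v‖ := by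
  set w := v - A v
  have hpartial : ∑ k ∈ range n, a (k + 1) ≤ ∑' k, a k :=
    calc ∑ k ∈ range n, a (k + 1) ≤ ∑ k ∈ range (n + 1), a k := by
          rw [sum_range_succ']; linarith [ha0 0]
      _ ≤ ∑' k, a k := hsum.sum_le_tsum _ fun k _ ↦ ha0 k
  calc ‖v - (A ^ (n + 1)) v‖ = ‖w + ∑ k ∈ range n, (A ^ (k + 1)) w‖ := by
        rw [← sum_range_pow_apply_sub_apply, sum_range_succ', pow_zero, one_apply_eq_self,
          add_comm]
    _ ≤ ‖w‖ + ∑ k ∈ range n, ‖(A ^ (k + 1)) w‖ :=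
        (norm_add_le _ _).trans (add_le_add_right (norm_sum_le _ _) _)
    _ ≤ ‖w‖ + ∑ k ∈ range n, a (k + 1) * ‖w‖ := by
        gcongr with k
        exact (norm_apply_le_norm_sub_mul_of_apply_eq_zero _ P hPw).trans
          (mul_le_mul_of_nonneg_right (hak _ k.succ_pos) (norm_nonneg w))
    _ ≤ (1 + ∑' k, a k) * ‖w‖ := by
        rw [← sum_mul, one_add_mul]
        gcongr

end ContinuousLinearMap

theorem summable_convergence_gives_spectral_gap_general {E : Type*} [NormedAddCommGroup E]
    [NormedSpace ℝ E] (G : Submodule ℝ E) (P A : E →L[ℝ] E)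
    (hPG : ∀ v ∈ G, P v = 0) (hAG : ∀ v ∈ G, A v ∈ G)
    (a : ℕ → ℝ) (ha0 : ∀ k, 0 ≤ a k) (hsum : Summable a)
    (S : ℝ) (hS : (∑' k, a k) ≤ S)
    (hak : ∀ k : ℕ, 1 ≤ k → ‖A ^ k - P‖ ≤ a k) :
    ∀ v ∈ G, ‖v‖ = 1 → 1 / (1 + S) ≤ ‖A v - v‖ := by
  intro v hv hv1
  have hPw : P (v - A v) = 0 := hPG _ (G.sub_mem hv (hAG v hv))
  have hbound (n : ℕ) : 1 ≤ (1 + S) * ‖v - A v‖ + a (n + 1) :=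
    calc 1 = ‖v‖ := hv1.symm
      _ ≤ ‖v - (A ^ (n + 1)) v‖ + ‖(A ^ (n + 1)) v‖ := norm_le_norm_sub_add _ _
      _ ≤ (1 + S) * ‖v - A v‖ + a (n + 1) := by
        gcongr
        · exact (ContinuousLinearMap.norm_sub_pow_succ_apply_le hPw ha0 hsum hak n).trans
            (by gcongr)
        · refine (ContinuousLinearMap.norm_apply_le_norm_sub_mul_of_apply_eq_zero _ P
            (hPG v hv)).trans ?_
          rw [hv1, mul_one]
          exact hak _ n.succ_pos
  have hlim : Tendsto (fun n ↦ (1 + S) * ‖v - A v‖ + a (n + 1)) atTop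
      (𝓝 ((1 + S) * ‖v - A v‖)) := by
    simpa using tendsto_const_nhds.add ((tendsto_add_atTop_iff_nat 1).2 hsum.tendsto_atTop_zero)
  have hS0 : 0 ≤ S := (tsum_nonneg ha0).trans hS
  rw [norm_sub_rev, div_le_iff₀ (by linarith)]
  linarith [ge_of_tendsto' hlim hbound]

/-- If `A^k` converges to the projection `P` with speed summable to at most `S`, then the
support of the averaging yields a Kazhdan-type bound: every unit vector `v ∈ G` satisfies
`‖A v - v‖ ≥ 1 / (1 + S)`. -/
theorem summable_convergence_gives_spectral_gap {E : Type*} [NormedAddCommGroup E]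
    [NormedSpace ℝ E] [CompleteSpace E] (F G : Submodule ℝ E)
    (hFc : IsClosed (F : Set E)) (hGc : IsClosed (G : Set E))
    (hspan : ∀ v : E, ∃ x ∈ F, ∃ y ∈ G, v = x + y)
    (hdisj : ∀ v : E, v ∈ F → v ∈ G → v = 0)
    (P A : E →L[ℝ] E)
    (hPF : ∀ v ∈ F, P v = v) (hPG : ∀ v ∈ G, P v = 0)
    (hAF : ∀ v ∈ F, A v = v) (hAG : ∀ v ∈ G, A v ∈ G)
    (hA1 : ‖A‖ ≤ 1)
    (a : ℕ → ℝ) (ha0 : ∀ k, 0 ≤ a k) (hsum : Summable a)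
    (S : ℝ) (hS : (∑' k, a k) ≤ S)
    (hak : ∀ k : ℕ, 1 ≤ k → ‖A ^ k - P‖ ≤ a k) :
    ∀ v ∈ G, ‖v‖ = 1 → 1 / (1 + S) ≤ ‖A v - v‖ :=
  summable_convergence_gives_spectral_gap_general G P A hPG hAG a ha0 hsum S hS hak
end

section
/- For every p ≥ 1 and all nonnegative reals a, b: |a − b|^p ≤ a^p + b^p + (1 + p·2^p)·max(a^{p−1} b, a b^{p−1}). -/
/-- For `p ≥ 1` and `a, b ≥ 0`:
`|a - b|^p ≤ a^p + b^p + (1 + p·2^p)·max(a^{p-1} b, a b^{p-1})`. -/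
theorem abs_sub_rpow_le (p a b : ℝ) (hp : 1 ≤ p) (ha : 0 ≤ a) (hb : 0 ≤ b) :
    |a - b| ^ p ≤ a ^ p + b ^ p +
      (1 + p * (2 : ℝ) ^ p) * max (a ^ (p - 1) * b) (a * b ^ (p - 1)) := by
  have hp0 : 0 ≤ p := le_trans zero_le_one hp
  have habs : |a - b| ≤ max a b := by
    rcases le_total a b with h | h
    · rw [abs_of_nonpos (by linarith)]; exact le_max_of_le_right (by linarith)
    · rw [abs_of_nonneg (by linarith)]; exact le_max_of_le_left (by linarith)
  have h1 : |a - b| ^ p ≤ (max a b) ^ p :=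
    Real.rpow_le_rpow (abs_nonneg _) habs hp0
  have h2 : (max a b) ^ p ≤ a ^ p + b ^ p := by
    rcases max_cases a b with ⟨h, _⟩ | ⟨h, _⟩ <;> rw [h]
    · nlinarith [Real.rpow_nonneg hb p]
    · nlinarith [Real.rpow_nonneg ha p]
  have h3 : 0 ≤ (1 + p * (2 : ℝ) ^ p) * max (a ^ (p - 1) * b) (a * b ^ (p - 1)) := by
    apply mul_nonneg
    · have : (0:ℝ) ≤ (2:ℝ) ^ p := Real.rpow_nonneg (by norm_num) p
      nlinarith
    · exact le_max_of_le_left (mul_nonneg (Real.rpow_nonneg ha _) hb)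
  linarith
end

section
/- Let (X, ν) be a probability space, E = Lᵖ(X, ν) for some 1 < p < ∞ with conjugate exponent q, and let (h_n) be measurable functions with ‖h_n − M h_n‖_p^p ≤ C · M h_n where M h = ∫ h dν and 0 ≤ M h_n ≤ 1. Suppose operators A_n on E satisfy ‖A_n(h − Mh)‖_p ≤ λ^n ‖h − Mh‖_p for some λ ∈ (0,1). Then for all N ≥ M ≥ 1: ‖∑_{i=M}^N (A_i h_i − M h_i)‖_p^p ≤ (C/(1−λ^q)^{p/q}) · ∑_{i=M}^N M h_i. -/
/-!
Since `A_i` fixes constants, `A_i h_i - M h_i = A_i (h_i - M h_i)` with `h_i - M h_i` of mean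
zero, so its norm is at most `λ^i ‖h_i - M h_i‖_p`. Hölder's inequality for the weights `λ^i`,
whose `q`-th powers form a geometric series summing to at most `1 / (1 - λ^q)`, then gives
the bound.
-/

open MeasureTheory

noncomputable def constLp {X : Type*} [MeasurableSpace X] (ν : Measure X)
    [IsFiniteMeasure ν] (p : ENNReal) (c : ℝ) : Lp ℝ p ν :=
  (memLp_const c).toLp (fun _ => c)

section Centering

variable {X : Type*} [MeasurableSpace X] {ν : Measure X} [IsProbabilityMeasure ν] {p : ENNReal}

theorem integral_constLp (c : ℝ) : ∫ x, constLp ν p c x ∂ν = c := by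
  rw [constLp, integral_congr_ae (memLp_const c).coeFn_toLp]
  simp

theorem integral_sub_constLp_integral [Fact (1 ≤ p)] (f : Lp ℝ p ν) :
    ∫ x, (f - constLp ν p (∫ y, f y ∂ν)) x ∂ν = 0 := by
  rw [integral_congr_ae (Lp.coeFn_sub _ _), Pi.sub_def,
    integral_sub ((Lp.memLp f).integrable Fact.out) ((Lp.memLp _).integrable Fact.out),
    integral_constLp, sub_self]

end Centering

theorem sum_pow_le_inv_one_sub {r : ℝ} (hr0 : 0 ≤ r) (hr1 : r < 1) (s : Finset ℕ) :
    ∑ i ∈ s, r ^ i ≤ (1 - r)⁻¹ :=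
  (tsum_geometric_of_lt_one hr0 hr1) ▸
    (summable_geometric_of_lt_one hr0 hr1).sum_le_tsum s fun i _ => pow_nonneg hr0 i

theorem rpow_sum_mul_le_of_sum_rpow_le {ι : Type*} (s : Finset ι) {p q : ℝ}
    (hpq : p.HolderConjugate q) {a w : ι → ℝ} (ha : ∀ i ∈ s, 0 ≤ a i) (hw : ∀ i ∈ s, 0 ≤ w i)
    {B K : ℝ} (hB : ∑ i ∈ s, a i ^ p ≤ B) (hK : ∑ i ∈ s, w i ^ q ≤ K) :
    (∑ i ∈ s, a i * w i) ^ p ≤ B * K ^ (p / q) := by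
  have hA0 : 0 ≤ ∑ i ∈ s, a i ^ p := Finset.sum_nonneg fun i hi => Real.rpow_nonneg (ha i hi) p
  have hW0 : 0 ≤ ∑ i ∈ s, w i ^ q := Finset.sum_nonneg fun i hi => Real.rpow_nonneg (hw i hi) q
  have hB0 : 0 ≤ B := hA0.trans hB
  have hK0 : 0 ≤ K := hW0.trans hK
  have holder : ∑ i ∈ s, a i * w i ≤ B ^ (1 / p) * K ^ (1 / q) :=
    (Real.inner_le_Lp_mul_Lq_of_nonneg s hpq ha hw).trans <|
      mul_le_mul (Real.rpow_le_rpow hA0 hB (by simp [hpq.nonneg]))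
        (Real.rpow_le_rpow hW0 hK (by simp [hpq.symm.nonneg])) (Real.rpow_nonneg hW0 _)
        (Real.rpow_nonneg hB0 _)
  calc (∑ i ∈ s, a i * w i) ^ p ≤ (B ^ (1 / p) * K ^ (1 / q)) ^ p :=
        Real.rpow_le_rpow (Finset.sum_nonneg fun i hi => mul_nonneg (ha i hi) (hw i hi))
          holder hpq.nonneg
    _ = B * K ^ (p / q) := by
        rw [Real.mul_rpow (by positivity) (by positivity), ← Real.rpow_mul hB0,
          ← Real.rpow_mul hK0, one_div_mul_cancel hpq.ne_zero, Real.rpow_one,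
          one_div_mul_eq_div]

theorem lp_partial_sum_estimate_general {X : Type*} [MeasurableSpace X]
    (ν : Measure X) [IsProbabilityMeasure ν]
    (p q : ℝ) (hp : 1 < p) [Fact (1 ≤ ENNReal.ofReal p)] (hq : 1 / p + 1 / q = 1)
    (h : ℕ → Lp ℝ (ENNReal.ofReal p) ν)
    (Mh : ℕ → ℝ) (hMh : ∀ n, Mh n = ∫ x, h n x ∂ν)
    (C : ℝ)
    (hvar : ∀ n, ‖h n - constLp ν (ENNReal.ofReal p) (Mh n)‖ ^ p ≤ C * Mh n)
    (lam : ℝ) (hlam0 : 0 < lam) (hlam1 : lam < 1)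
    (A : ℕ → Lp ℝ (ENNReal.ofReal p) ν →L[ℝ] Lp ℝ (ENNReal.ofReal p) ν)
    (hAconst : ∀ n c, A n (constLp ν (ENNReal.ofReal p) c) = constLp ν (ENNReal.ofReal p) c)
    (hAcontr : ∀ n (f : Lp ℝ (ENNReal.ofReal p) ν), (∫ x, f x ∂ν) = 0 →
      ‖A n f‖ ≤ lam ^ n * ‖f‖) :
    ∀ M N : ℕ, 1 ≤ M → M ≤ N →
      ‖∑ i ∈ Finset.Icc M N, (A i (h i) - constLp ν (ENNReal.ofReal p) (Mh i))‖ ^ p ≤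
        (C / (1 - lam ^ q) ^ (p / q)) * ∑ i ∈ Finset.Icc M N, Mh i := by
  intro M N _ _
  have hpq : p.HolderConjugate q :=
    Real.holderConjugate_iff.mpr ⟨hp, by simpa [one_div] using hq⟩
  set g := fun i => h i - constLp ν (ENNReal.ofReal p) (Mh i)
  have hterm : ∀ i, ‖A i (h i) - constLp ν (ENNReal.ofReal p) (Mh i)‖ ≤ ‖g i‖ * lam ^ i := by
    intro i
    rw [← hAconst i, ← map_sub, mul_comm]
    refine hAcontr i (g i) ?_
    simpa only [g, hMh i] using integral_sub_constLp_integral (h i)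
  have hgeom : ∑ i ∈ Finset.Icc M N, (lam ^ i) ^ q ≤ (1 - lam ^ q)⁻¹ := by
    simp_rw [← Real.rpow_pow_comm hlam0.le]
    exact sum_pow_le_inv_one_sub (by positivity) (Real.rpow_lt_one hlam0.le hlam1 hpq.symm.pos) _
  calc ‖∑ i ∈ Finset.Icc M N, (A i (h i) - constLp ν (ENNReal.ofReal p) (Mh i))‖ ^ p
      ≤ (∑ i ∈ Finset.Icc M N, ‖g i‖ * lam ^ i) ^ p :=
        Real.rpow_le_rpow (norm_nonneg _)
          ((norm_sum_le _ _).trans (Finset.sum_le_sum fun i _ => hterm i)) hpq.nonneg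
    _ ≤ (∑ i ∈ Finset.Icc M N, C * Mh i) * (1 - lam ^ q)⁻¹ ^ (p / q) :=
        rpow_sum_mul_le_of_sum_rpow_le _ hpq (fun i _ => norm_nonneg _)
          (fun i _ => by positivity) (Finset.sum_le_sum fun i _ => hvar i) hgeom
    _ = (C / (1 - lam ^ q) ^ (p / q)) * ∑ i ∈ Finset.Icc M N, Mh i := by
        rw [Real.inv_rpow (sub_nonneg.mpr (Real.rpow_le_one hlam0.le hlam1.le hpq.symm.nonneg)),
          ← Finset.mul_sum]
        ring

/-- Quantitative estimate: if each `h_n` has centered `p`-th moment controlled by its mean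
and the operators `A_n` fix constants and contract the mean-zero subspace with factor
`λ^n`, then `‖∑_{i=M}^N (A_i h_i - M h_i)‖_p^p ≤ (C/(1-λ^q)^{p/q}) ∑_{i=M}^N M h_i`. -/
theorem lp_partial_sum_estimate {X : Type*} [MeasurableSpace X]
    (ν : Measure X) [IsProbabilityMeasure ν]
    (p q : ℝ) (hp : 1 < p) [Fact (1 ≤ ENNReal.ofReal p)] (hq : 1 / p + 1 / q = 1)
    (h : ℕ → Lp ℝ (ENNReal.ofReal p) ν)
    (Mh : ℕ → ℝ) (hMh : ∀ n, Mh n = ∫ x, h n x ∂ν)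
    (hMh0 : ∀ n, 0 ≤ Mh n) (hMh1 : ∀ n, Mh n ≤ 1)
    (C : ℝ) (hC : 0 < C)
    (hvar : ∀ n, ‖h n - constLp ν (ENNReal.ofReal p) (Mh n)‖ ^ p ≤ C * Mh n)
    (lam : ℝ) (hlam0 : 0 < lam) (hlam1 : lam < 1)
    (A : ℕ → Lp ℝ (ENNReal.ofReal p) ν →L[ℝ] Lp ℝ (ENNReal.ofReal p) ν)
    (hAconst : ∀ n c, A n (constLp ν (ENNReal.ofReal p) c) = constLp ν (ENNReal.ofReal p) c)
    (hAcontr : ∀ n (f : Lp ℝ (ENNReal.ofReal p) ν), (∫ x, f x ∂ν) = 0 →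
      ‖A n f‖ ≤ lam ^ n * ‖f‖) :
    ∀ M N : ℕ, 1 ≤ M → M ≤ N →
      ‖∑ i ∈ Finset.Icc M N, (A i (h i) - constLp ν (ENNReal.ofReal p) (Mh i))‖ ^ p ≤
        (C / (1 - lam ^ q) ^ (p / q)) * ∑ i ∈ Finset.Icc M N, Mh i :=
  lp_partial_sum_estimate_general ν p q hp hq h Mh hMh C hvar lam hlam0 hlam1 A hAconst hAcontr
end
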